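/- Let (T,R) be a factorization of ℤ/nℤ with n = pq a product of two (not necessarily distinct) primes, and suppose both T and R have more than one element. If R is periodic, then R is an arithmetic progression of the form R = {r} + {0, p', 2p', ..., (q'−1)p'} where p'q' = n, p' is prime, Card(R) = q', and T is a set contained in a union of the residues {0,...,p'−1} shifted by multiples of p' with T reducing mod p' to {0,...,p'−1}. -/
import Mathlib


/-- `(T, R)` is a factorization of `ℤ/mℤ`: every `z ∈ {0, …, m-1}` has a unique
representation `z ≡ t + r (mod m)` with `t ∈ T`, `r ∈ R`. -/
def IsFactorization (m : ℕ) (T R : Finset ℕ) : Prop :=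
  ∀ z < m, ∃! p : ℕ × ℕ, p.1 ∈ T ∧ p.2 ∈ R ∧ (p.1 + p.2) % m = z

/-- `R` is periodic modulo `n`: some `g` with `n ∤ g` satisfies `g + R = R`
as sets of residues modulo `n`. -/
def IsPeriodic (n : ℕ) (R : Finset ℕ) : Prop :=
  ∃ g : ℕ, ¬ n ∣ g ∧
    ∀ z : ℕ, (∃ r ∈ R, r % n = z % n) ↔ ∃ r ∈ R, (r + g) % n = z % n


lemma auxPrime {p q a b : ℕ} (hp : p.Prime) (hq : q.Prime) (h : a * b = p * q)
    (ha : 1 < a) (hb : 1 < b) : a.Prime := by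
  by_cases hpa : p ∣ a
  · obtain ⟨k, rfl⟩ := hpa
    have hkb : k * b = q := by
      have h2 : p * (k * b) = p * q := by rw [← h]; ring
      exact Nat.eq_of_mul_eq_mul_left hp.pos h2
    rcases hq.eq_one_or_self_of_dvd k ⟨b, hkb.symm⟩ with h1 | h1
    · subst h1; simpa using hp
    · subst h1; have : b = 1 := by
        have hq0 := hq.pos; nlinarith [hkb]
      omega
  · have hcop : a.Coprime p := ((Nat.Prime.coprime_iff_not_dvd hp).mpr hpa).symm
    have hdvd : a ∣ p * q := ⟨b, h.symm⟩
    have haq : a ∣ q := hcop.dvd_of_dvd_mul_left hdvd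
    rcases hq.eq_one_or_self_of_dvd a haq with h1 | h1
    · omega
    · subst h1; exact hq

lemma auxNsmulMem {G : Type*} [AddCommGroup G] (g : G) (S : Finset G)
    (hS : ∀ x ∈ S, x + g ∈ S) : ∀ x ∈ S, ∀ k : ℕ, x + k • g ∈ S := by
  intro x hx k
  induction k with
  | zero => simpa using hx
  | succ k ih =>
    have := hS _ ih
    rwa [succ_nsmul, ← add_assoc]

lemma auxDvdCard {G : Type*} [AddCommGroup G] [DecidableEq G] (g : G)
    (hg : 0 < addOrderOf g) :
    ∀ S : Finset G, (∀ x ∈ S, x + g ∈ S) → addOrderOf g ∣ S.card := by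
  intro S
  induction S using Finset.strongInduction with
  | _ S ih =>
    intro hS
    rcases S.eq_empty_or_nonempty with rfl | ⟨r, hr⟩
    · simp
    · set m := addOrderOf g with hm
      set O : Finset G := (Finset.range m).image (fun k => r + k • g) with hO
      have hOsub : O ⊆ S := by
        intro x hx
        simp only [hO, Finset.mem_image, Finset.mem_range] at hx
        obtain ⟨k, -, rfl⟩ := hx
        exact auxNsmulMem g S hS r hr k
      have hOcard : O.card = m := by
        rw [hO, Finset.card_image_of_injOn, Finset.card_range]
        intro k1 h1 k2 h2 he
        simp only [Finset.coe_range, Set.mem_Iio] at h1 h2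
        exact nsmul_injOn_Iio_addOrderOf h1 h2 (add_left_cancel he)
      have hrO : r ∈ O := by
        simp only [hO, Finset.mem_image, Finset.mem_range]
        exact ⟨0, hg, by simp⟩
      have hS' : ∀ x ∈ S \ O, x + g ∈ S \ O := by
        intro x hx
        rw [Finset.mem_sdiff] at hx ⊢
        refine ⟨hS x hx.1, fun hxO => hx.2 ?_⟩
        simp only [hO, Finset.mem_image, Finset.mem_range] at hxO ⊢
        obtain ⟨k, hk, hke⟩ := hxO
        rcases Nat.eq_zero_or_pos k with rfl | hk0
        · refine ⟨m - 1, by omega, ?_⟩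
          have h1 : (r + (m - 1) • g) + g = r := by
            rw [add_assoc, ← succ_nsmul]
            have hmm : m - 1 + 1 = m := by omega
            rw [hmm, hm, addOrderOf_nsmul_eq_zero, add_zero]
          apply add_right_cancel (b := g)
          rw [h1]; simpa using hke
        · refine ⟨k - 1, by omega, ?_⟩
          apply add_right_cancel (b := g)
          rw [add_assoc, ← succ_nsmul]
          have hkk : k - 1 + 1 = k := by omega
          rw [hkk]; exact hke
      have hss : S \ O ⊂ S := Finset.sdiff_ssubset hOsub ⟨r, hrO⟩
      have hd := ih _ hss hS'
      have hcard : S.card = (S \ O).card + m := by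
        rw [Finset.card_sdiff_of_subset hOsub, hOcard]
        have := Finset.card_le_card hOsub
        omega
      rw [hcard]
      exact Nat.dvd_add hd (dvd_refl m)

/-- Let `(T, R)` be a factorization of `ℤ/nℤ` with `n = pq` a product of two primes
and `Card(T), Card(R) > 1`.  If `R` is periodic, then `R` is an arithmetic
progression `R = {r} + {0, p', 2p', …, (q'−1)p'}` modulo `n`, where `p'q' = n`,
`p'` is prime and `Card(R) = q'`, and `T` reduces modulo `p'` to `{0, …, p'−1}`,
each residue being attained exactly once. -/
theorem periodic_factor_two_primes (p q n : ℕ) (hp : p.Prime) (hq : q.Prime)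
    (hn : n = p * q) (T R : Finset ℕ) (hF : IsFactorization n T R)
    (hTcard : 1 < T.card) (hRcard : 1 < R.card) (hper : IsPeriodic n R) :
    ∃ p' q' r : ℕ, p' * q' = n ∧ p'.Prime ∧ R.card = q' ∧
      (∀ z < n, (∃ ρ ∈ R, ρ % n = z) ↔ ∃ k < q', (r + k * p') % n = z) ∧
      (∀ z < p', ∃! t : ℕ, t ∈ T ∧ t % p' = z) := by
  unfold IsFactorization at hF
  unfold IsPeriodic at hper
  obtain ⟨g, hg, hperiod⟩ := hper
  have hn0 : 0 < n := by
    have := hp.pos; have := hq.pos; subst hn; positivity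
  haveI : NeZero n := ⟨hn0.ne'⟩
  have hcast : ∀ a b : ℕ, ((a : ZMod n) = b) ↔ a % n = b % n := fun a b =>
    ZMod.natCast_eq_natCast_iff a b n
  -- cards multiply to n
  have hprod : T.card * R.card = n := by
    rw [← Finset.card_product, ← Finset.card_range n]
    apply Finset.card_bij (fun a _ => (a.1 + a.2) % n)
    · intro a _; exact Finset.mem_range.mpr (Nat.mod_lt _ hn0)
    · intro a ha b hb he
      rw [Finset.mem_product] at ha hb
      obtain ⟨P, -, hun⟩ := hF _ (Nat.mod_lt (a.1 + a.2) hn0)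
      have h1 := hun a ⟨ha.1, ha.2, rfl⟩
      have h2 := hun b ⟨hb.1, hb.2, he.symm⟩
      rw [h1, h2]
    · intro z hz
      obtain ⟨P, hP, -⟩ := hF z (Finset.mem_range.mp hz)
      exact ⟨P, Finset.mem_product.mpr ⟨hP.1, hP.2.1⟩, hP.2.2⟩
  set p' := T.card with hp'def
  set q' := R.card with hq'def
  have hn' : p' * q' = n := hprod
  have hpq : p' * q' = p * q := by rw [hn', hn]
  have hp'prime : p'.Prime := auxPrime hp hq hpq hTcard hRcard
  have hq'prime : q'.Prime := auxPrime hp hq (by rw [← hpq]; ring) hRcard hTcard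
  have hp'0 : 0 < p' := hp'prime.pos
  have hq'0 : 0 < q' := hq'prime.pos
  obtain ⟨t0, ht0⟩ : T.Nonempty := Finset.card_pos.mp (by omega)
  obtain ⟨r, hrR⟩ : R.Nonempty := Finset.card_pos.mp (by omega)
  -- injectivity of cast on R
  have hRinj : Set.InjOn (Nat.cast : ℕ → ZMod n) R := by
    intro ρ1 h1 ρ2 h2 he
    have hmod : ρ1 % n = ρ2 % n := (hcast _ _).mp he
    obtain ⟨P, -, hun⟩ := hF _ (Nat.mod_lt (t0 + ρ1) hn0)
    have e1 := hun (t0, ρ1) ⟨ht0, h1, rfl⟩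
    have e2 := hun (t0, ρ2) ⟨ht0, h2, Nat.ModEq.add_left t0 hmod.symm⟩
    exact congrArg Prod.snd (e1.trans e2.symm)
  classical
  set R' : Finset (ZMod n) := R.image (Nat.cast) with hR'def
  have hR'card : R'.card = q' := Finset.card_image_of_injOn hRinj
  have hmemR' : ∀ x : ZMod n, x ∈ R' ↔ ∃ ρ ∈ R, (ρ : ZMod n) = x := by
    intro x; simp [hR'def]
  set g' : ZMod n := (g : ZMod n) with hg'def
  have hg'0 : g' ≠ 0 := fun h => hg ((ZMod.natCast_eq_zero_iff g n).mp h)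
  -- invariance of R' under translation by g'
  have hinv0 : ∀ x : ZMod n, x ∈ R' ↔ x - g' ∈ R' := by
    intro x
    have hx := hperiod x.val
    have l1 : (∃ ρ ∈ R, ρ % n = x.val % n) ↔ x ∈ R' := by
      rw [hmemR']
      constructor
      · rintro ⟨ρ, hρ, he⟩
        refine ⟨ρ, hρ, ?_⟩
        have := (hcast ρ x.val).mpr he
        rwa [ZMod.natCast_rightInverse x] at this
      · rintro ⟨ρ, hρ, he⟩
        exact ⟨ρ, hρ, (hcast ρ x.val).mp (by rw [ZMod.natCast_rightInverse x]; exact he)⟩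
    have l2 : (∃ ρ ∈ R, (ρ + g) % n = x.val % n) ↔ x - g' ∈ R' := by
      rw [hmemR']
      constructor
      · rintro ⟨ρ, hρ, he⟩
        refine ⟨ρ, hρ, ?_⟩
        have h1 : ((ρ + g : ℕ) : ZMod n) = x := by
          have := (hcast (ρ + g) x.val).mpr he
          rwa [ZMod.natCast_rightInverse x] at this
        push_cast at h1
        rw [hg'def]
        exact eq_sub_of_add_eq h1
      · rintro ⟨ρ, hρ, he⟩
        refine ⟨ρ, hρ, ?_⟩
        apply (hcast (ρ + g) x.val).mp
        rw [ZMod.natCast_rightInverse x]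
        push_cast
        rw [he, hg'def]
        ring
    exact l1.symm.trans (hx.trans l2)
  have hinv : ∀ x ∈ R', x + g' ∈ R' := by
    intro x hx
    have := (hinv0 (x + g')).mpr (by simpa using hx)
    exact this
  set m := addOrderOf g' with hmdef
  have hm0 : 0 < m := addOrderOf_pos g'
  have hm1 : m ≠ 1 := fun h => hg'0 (AddMonoid.addOrderOf_eq_one_iff.mp h)
  have hmdvd : m ∣ q' := hR'card ▸ auxDvdCard g' hm0 R' hinv
  have hmq' : m = q' := (hq'prime.eq_one_or_self_of_dvd m hmdvd).resolve_left hm1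
  have hq'g : q' • g' = 0 := hmq' ▸ addOrderOf_nsmul_eq_zero g'
  -- orbit of r
  set O : Finset (ZMod n) := (Finset.range q').image (fun k => (r : ZMod n) + k • g') with hOdef
  have hOsub : O ⊆ R' := by
    intro x hx
    simp only [hOdef, Finset.mem_image, Finset.mem_range] at hx
    obtain ⟨k, -, rfl⟩ := hx
    exact auxNsmulMem g' R' hinv _ ((hmemR' _).mpr ⟨r, hrR, rfl⟩) k
  have hOcard : O.card = q' := by
    rw [hOdef, Finset.card_image_of_injOn, Finset.card_range]
    intro k1 h1 k2 h2 he
    simp only [Finset.coe_range, Set.mem_Iio] at h1 h2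
    rw [← hmq'] at h1 h2
    exact nsmul_injOn_Iio_addOrderOf h1 h2 (add_left_cancel he)
  have hOR' : O = R' := Finset.eq_of_subset_of_card_le hOsub (by rw [hR'card, hOcard])
  set A : Finset (ZMod n) := (Finset.range q').image (fun j => ((r + j * p' : ℕ) : ZMod n)) with hAdef
  have hOA : O ⊆ A := by
    intro x hx
    simp only [hOdef, Finset.mem_image, Finset.mem_range] at hx
    obtain ⟨k, -, rfl⟩ := hx
    set a := (k • g').val with hadef
    have ha1 : ((a : ℕ) : ZMod n) = k • g' := ZMod.natCast_rightInverse _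
    have ha2 : a < n := ZMod.val_lt _
    have hq'a : ((q' * a : ℕ) : ZMod n) = 0 := by
      have hsm : q' • (k • g') = 0 := by
        rw [smul_smul, Nat.mul_comm, ← smul_smul, hq'g, smul_zero]
      calc ((q' * a : ℕ) : ZMod n) = (q' : ZMod n) * a := by push_cast; ring
        _ = q' • ((a : ℕ) : ZMod n) := by rw [nsmul_eq_mul]
        _ = q' • (k • g') := by rw [ha1]
        _ = 0 := hsm
    have hdvd : p' ∣ a := by
      have hna : n ∣ q' * a := (ZMod.natCast_eq_zero_iff _ n).mp hq'a
      obtain ⟨e, he⟩ := hna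
      refine ⟨e, ?_⟩
      have h2 : q' * a = q' * (p' * e) := by rw [he, ← hn']; ring
      exact Nat.eq_of_mul_eq_mul_left hq'0 h2
    obtain ⟨e, hae⟩ := hdvd
    have he' : e < q' := by
      have : p' * e < p' * q' := by rw [hn', ← hae]; exact ha2
      exact Nat.lt_of_mul_lt_mul_left this
    simp only [hAdef, Finset.mem_image, Finset.mem_range]
    refine ⟨e, he', ?_⟩
    have h3 : ((r + e * p' : ℕ) : ZMod n) = (r : ZMod n) + ((p' * e : ℕ) : ZMod n) := by
      push_cast; ring
    rw [h3, ← hae, ha1]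
  have hA : R' = A := by
    rw [← hOR']
    refine Finset.eq_of_subset_of_card_le hOA ?_
    rw [hOcard]
    exact le_trans Finset.card_image_le (by simp)
  -- the AP characterization
  have hAP : ∀ z, z < n → ((∃ ρ ∈ R, ρ % n = z) ↔ ∃ k, k < q' ∧ (r + k * p') % n = z) := by
    intro z hz
    have hzmod : z % n = z := Nat.mod_eq_of_lt hz
    constructor
    · rintro ⟨ρ, hρ, he⟩
      have hx : ((z : ℕ) : ZMod n) ∈ A := by
        rw [← hA, hmemR']
        exact ⟨ρ, hρ, (hcast _ _).mpr (by rw [hzmod]; exact he)⟩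
      simp only [hAdef, Finset.mem_image, Finset.mem_range] at hx
      obtain ⟨k, hk, hke⟩ := hx
      refine ⟨k, hk, ?_⟩
      have := (hcast _ _).mp hke
      rwa [hzmod] at this
    · rintro ⟨k, hk, hke⟩
      have hmem : ((r + k * p' : ℕ) : ZMod n) ∈ A := by
        simp only [hAdef, Finset.mem_image, Finset.mem_range]
        exact ⟨k, hk, rfl⟩
      rw [← hA, hmemR'] at hmem
      obtain ⟨ρ, hρ, he⟩ := hmem
      refine ⟨ρ, hρ, ?_⟩
      have h1 := (hcast _ _).mp he
      rw [h1, hke]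
  have hp'dvd : p' ∣ n := ⟨q', hn'.symm⟩
  -- every element of R is ≡ r mod p'
  have hRmod : ∀ ρ ∈ R, ρ % p' = r % p' := by
    intro ρ hρ
    have hx : ((ρ : ℕ) : ZMod n) ∈ A := by
      rw [← hA]; exact (hmemR' _).mpr ⟨ρ, hρ, rfl⟩
    simp only [hAdef, Finset.mem_image, Finset.mem_range] at hx
    obtain ⟨k, -, hke⟩ := hx
    have h1 : (r + k * p') % n = ρ % n := (hcast _ _).mp hke
    have h2 : (r + k * p') % p' = ρ % p' :=
      Nat.ModEq.of_dvd hp'dvd (show Nat.ModEq n (r + k * p') ρ from h1)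
    rw [← h2, Nat.add_mul_mod_self_right]
  -- uniqueness of elements of T modulo p'
  have hTinj : ∀ t1 ∈ T, ∀ t2 ∈ T, t1 % p' = t2 % p' → t1 = t2 := by
    intro t1 ht1 t2 ht2 hte
    set c := t1 + n - t2 % n with hcdef
    have ht2n : t2 % n < n := Nat.mod_lt _ hn0
    have hc : c + t2 % n = t1 + n := by omega
    have hpc : p' ∣ c := by
      have m1 : c + t2 % n ≡ t1 + n [MOD p'] := by rw [hc]
      have m2 : t2 % n ≡ t1 [MOD p'] := by
        show t2 % n % p' = t1 % p'
        rw [Nat.mod_mod_of_dvd t2 hp'dvd, ← hte]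
      have m3 : t1 + n ≡ t1 [MOD p'] := by
        have := Nat.ModEq.add_left t1 ((Nat.modEq_zero_iff_dvd).mpr hp'dvd)
        simpa using this
      have m4 : c + t2 % n ≡ c + t1 [MOD p'] := Nat.ModEq.add_left c m2
      have m5 : c + t1 ≡ 0 + t1 [MOD p'] := by
        have := m4.symm.trans (m1.trans m3)
        simpa using this
      have m6 : c ≡ 0 [MOD p'] := m5.add_right_cancel' t1
      exact (Nat.modEq_zero_iff_dvd).mp m6
    obtain ⟨j0, hj0⟩ := hpc
    set k := j0 % q' with hkdef
    have hk : k < q' := Nat.mod_lt _ hq'0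
    obtain ⟨ρ2, hρ2R, hρ2⟩ := (hAP _ (Nat.mod_lt (r + k * p') hn0)).mpr ⟨k, hk, rfl⟩
    have hdm : q' * (j0 / q') + k = j0 := by rw [hkdef]; exact Nat.div_add_mod j0 q'
    have hjk : (j0 * p') % n = (k * p') % n := by
      conv_lhs => rw [← hdm]
      rw [add_mul]
      rw [show q' * (j0 / q') * p' = (j0 / q') * n by rw [← hn']; ring]
      rw [add_comm, Nat.add_mul_mod_self_right]
    have key : (t2 + ρ2) % n = (t1 + r) % n := by
      rw [← hcast]
      have c1 : ((ρ2 : ℕ) : ZMod n) = ((r + k * p' : ℕ) : ZMod n) := by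
        rw [hcast]
        exact hρ2
      have c2 : ((k * p' : ℕ) : ZMod n) = ((j0 * p' : ℕ) : ZMod n) := (hcast _ _).mpr hjk.symm
      have c3 : ((c : ℕ) : ZMod n) = (t1 : ZMod n) - t2 := by
        have h1 : ((c + t2 % n : ℕ) : ZMod n) = ((t1 + n : ℕ) : ZMod n) := by rw [hc]
        push_cast at h1
        rw [ZMod.natCast_mod] at h1
        rw [ZMod.natCast_self, add_zero] at h1
        exact eq_sub_of_add_eq h1
      have c4 : ((j0 * p' : ℕ) : ZMod n) = (t1 : ZMod n) - t2 := by
        rw [← c3, hj0]; push_cast; ring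
      push_cast at c1 c2 c4 ⊢
      rw [c1, c2, c4]
      ring
    obtain ⟨P, -, hun⟩ := hF _ (Nat.mod_lt (t1 + r) hn0)
    have e1 := hun (t1, r) ⟨ht1, hrR, rfl⟩
    have e2 := hun (t2, ρ2) ⟨ht2, hρ2R, key⟩
    exact congrArg Prod.fst (e1.trans e2.symm)
  refine ⟨p', q', r, hn', hp'prime, rfl, hAP, ?_⟩
  intro w hw
  obtain ⟨⟨t, ρ⟩, ⟨htT, hρR, hte⟩, -⟩ := hF _ (Nat.mod_lt (w + r) hn0)
  have htw : t % p' = w := by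
    have h1 : t + ρ ≡ w + r [MOD p'] :=
      Nat.ModEq.of_dvd hp'dvd (show Nat.ModEq n (t + ρ) (w + r) from hte)
    have h2 : ρ % p' = r % p' := hRmod ρ hρR
    have m2 : w + ρ ≡ w + r [MOD p'] := Nat.ModEq.add_left w h2
    have h3 : t ≡ w [MOD p'] := (h1.trans m2.symm).add_right_cancel' ρ
    exact (show t % p' = w % p' from h3).trans (Nat.mod_eq_of_lt hw)
  refine ⟨t, ⟨htT, htw⟩, ?_⟩
  rintro t2 ⟨ht2T, ht2e⟩
  exact hTinj t2 ht2T t htT (ht2e.trans htw.symm)
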